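/- arXiv:1811.07780 — 3 statements merged into one kernel-verified Lean document; each statement's English description precedes it below -/
import Mathlib

section
/- For any finite simple graph G with m edges, the sum over all edges (u,v) of min(deg(u), deg(v)) is at most 5·m·√m. -/
/-!
Since `min a b ^ 2 ≤ a * b`, the sum of `min (deg u) (deg v) ^ 2` over the edges is at most
half the sum of `deg u * deg v` over the darts, which is `∑ u, deg u * ∑_{v ~ u} deg v ≤ (2m)²`.
Cauchy–Schwarz over the `m` edges then gives `(∑ min (deg u) (deg v))² ≤ 2 m³ ≤ (5 m √m)²`.
-/

open Finset

namespace SimpleGraph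

variable {V : Type*} [Fintype V] (G : SimpleGraph V) [DecidableRel G.Adj]

theorem sum_darts_eq_sum_sum_neighborFinset {M : Type*} [AddCommMonoid M] (f : V → V → M) :
    ∑ d : G.Dart, f d.fst d.snd = ∑ u, ∑ v ∈ G.neighborFinset u, f u v := by
  rw [← sum_finset_product' (univ.filter fun p : V × V => G.Adj p.1 p.2) _ _
    (by simp [neighborFinset_eq_filter])]
  exact sum_bij' (fun d _ => d.toProd) (fun p hp => ⟨p, (mem_filter.1 hp).2⟩)
    (by simp) (by simp) (by simp) (by simp) (by simp)

theorem sum_darts_degree_mul_degree_le [DecidableEq V] :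
    ∑ d : G.Dart, G.degree d.fst * G.degree d.snd ≤ (2 * #G.edgeFinset) ^ 2 := by
  rw [G.sum_darts_eq_sum_sum_neighborFinset fun u v => G.degree u * G.degree v,
    ← sum_degrees_eq_twice_card_edges, sq, sum_mul]
  gcongr with u
  rw [← mul_sum]
  exact Nat.mul_le_mul_left _ (sum_le_sum_of_subset (subset_univ _))

theorem sum_darts_edge_eq_two_nsmul [DecidableEq V] {M : Type*} [AddCommMonoid M]
    (f : Sym2 V → M) :
    ∑ d : G.Dart, f d.edge = 2 • ∑ e ∈ G.edgeFinset, f e := by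
  rw [← sum_fiberwise_of_maps_to (g := Dart.edge) (t := G.edgeFinset)
    (fun d _ => G.mem_edgeFinset.2 d.edge_mem), smul_sum]
  refine sum_congr rfl fun e he => ?_
  rw [sum_congr rfl fun d hd => congrArg f (mem_filter.1 hd).2, sum_const,
    G.dart_edge_fiber_card e (G.mem_edgeFinset.1 he)]

def edgeMinDegree : Sym2 V → ℕ :=
  Sym2.lift ⟨fun u v => min (G.degree u) (G.degree v), fun _ _ => min_comm _ _⟩

theorem edgeMinDegree_sq_le (d : G.Dart) :
    G.edgeMinDegree d.edge ^ 2 ≤ G.degree d.fst * G.degree d.snd :=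
  (sq _).trans_le (Nat.mul_le_mul (min_le_left _ _) (min_le_right _ _))

theorem sum_edgeMinDegree_sq_le [DecidableEq V] :
    ∑ e ∈ G.edgeFinset, G.edgeMinDegree e ^ 2 ≤ 2 * #G.edgeFinset ^ 2 := by
  have := (sum_le_sum fun d _ => G.edgeMinDegree_sq_le d).trans G.sum_darts_degree_mul_degree_le
  rw [G.sum_darts_edge_eq_two_nsmul (G.edgeMinDegree · ^ 2), smul_eq_mul] at this
  linarith

theorem sq_sum_edgeMinDegree_le [DecidableEq V] :
    (∑ e ∈ G.edgeFinset, G.edgeMinDegree e) ^ 2 ≤ 2 * #G.edgeFinset ^ 3 :=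
  calc (∑ e ∈ G.edgeFinset, G.edgeMinDegree e) ^ 2
      ≤ #G.edgeFinset * ∑ e ∈ G.edgeFinset, G.edgeMinDegree e ^ 2 := sq_sum_le_card_mul_sum_sq
    _ ≤ #G.edgeFinset * (2 * #G.edgeFinset ^ 2) := by gcongr; exact G.sum_edgeMinDegree_sq_le
    _ = 2 * #G.edgeFinset ^ 3 := by ring

end SimpleGraph

/-- For any finite simple graph `G` with `m` edges, the sum over all edges `(u,v)` of
`min (deg u) (deg v)` is at most `5 * m * √m`. -/
theorem stmt_0 {V : Type*} [Fintype V] [DecidableEq V] (G : SimpleGraph V)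
    [DecidableRel G.Adj] (m : ℕ) (hm : m = G.edgeFinset.card) :
    ∑ e ∈ G.edgeFinset,
        Sym2.lift ⟨fun u v => (min (G.degree u) (G.degree v) : ℝ),
          fun u v => by simp [min_comm]⟩ e
      ≤ 5 * m * Real.sqrt m := by
  subst hm
  have hsum : ∑ e ∈ G.edgeFinset,
      Sym2.lift ⟨fun u v => (min (G.degree u) (G.degree v) : ℝ), fun u v => by simp [min_comm]⟩ e
      = ((∑ e ∈ G.edgeFinset, G.edgeMinDegree e : ℕ) : ℝ) := by
    push_cast
    refine sum_congr rfl fun e _ => ?_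
    induction e using Sym2.ind with
    | _ u v => simp [SimpleGraph.edgeMinDegree]
  have hsq : ((∑ e ∈ G.edgeFinset, G.edgeMinDegree e : ℕ) : ℝ) ^ 2 ≤ 2 * (#G.edgeFinset : ℝ) ^ 3 :=
    mod_cast G.sq_sum_edgeMinDegree_le
  rw [hsum, ← pow_le_pow_iff_left₀ (by positivity) (by positivity) two_ne_zero, mul_pow,
    Real.sq_sqrt (Nat.cast_nonneg _)]
  nlinarith [pow_nonneg (Nat.cast_nonneg (α := ℝ) #G.edgeFinset) 3]
end

section
/- With the star estimator X defined by sampling a vertex v with probability d_v/(2m), sampling an ℓ-subset of its neighborhood uniformly, and setting X = (2m/d_v)·binom(d_v,ℓ), one has Var(X) ≤ E[X²] ≤ 2m·Σ_{v: d_v ≥ ℓ} binom(d_v,ℓ)·d_v^{ℓ−1} ≤ 2 m^ℓ · E[X]. -/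
/-!
The star estimator `X` has expectation `E[X] = Σ_{d_v ≥ ℓ} C(d_v, ℓ)` and second moment
`E[X²] = Σ_{d_v ≥ ℓ} (2m / d_v) · C(d_v, ℓ)²`. Termwise, `C(d, ℓ) ≤ d^ℓ` turns the summands of
`E[X²]` into `2m · C(d, ℓ) · d^(ℓ-1)`, and `d ≤ m` turns those into `2 m^ℓ · C(d, ℓ)`.
-/

open Finset

theorem Finset.sum_mul_sub_sq_eq {ι : Type*} {s : Finset ι} {p : ι → ℝ} (hp : ∑ i ∈ s, p i = 1)
    (X : ι → ℝ) :
    ∑ i ∈ s, p i * (X i - ∑ j ∈ s, p j * X j) ^ 2 =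
      ∑ i ∈ s, p i * X i ^ 2 - (∑ j ∈ s, p j * X j) ^ 2 := by
  set μ := ∑ j ∈ s, p j * X j
  calc ∑ i ∈ s, p i * (X i - μ) ^ 2
      = ∑ i ∈ s, p i * X i ^ 2 - 2 * μ * ∑ i ∈ s, p i * X i + μ ^ 2 * ∑ i ∈ s, p i := by
        simp only [mul_sum, ← sum_sub_distrib, ← sum_add_distrib]
        exact sum_congr rfl fun i _ => by ring
    _ = ∑ i ∈ s, p i * X i ^ 2 - μ ^ 2 := by rw [hp]; ring

theorem Finset.sum_mul_sub_sq_le {ι : Type*} {s : Finset ι} {p : ι → ℝ} (hp : ∑ i ∈ s, p i = 1)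
    (X : ι → ℝ) :
    ∑ i ∈ s, p i * (X i - ∑ j ∈ s, p j * X j) ^ 2 ≤ ∑ i ∈ s, p i * X i ^ 2 := by
  rw [sum_mul_sub_sq_eq hp]
  exact sub_le_self _ (sq_nonneg _)

theorem SimpleGraph.sum_degree_div_eq_one {V : Type*} [Fintype V]
    (G : SimpleGraph V) [DecidableRel G.Adj] (h : G.edgeFinset.Nonempty) :
    ∑ v, (G.degree v : ℝ) / (2 * #G.edgeFinset) = 1 := by
  rw [← sum_div, div_eq_one_iff_eq (by positivity)]
  exact_mod_cast G.sum_degrees_eq_twice_card_edges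

theorem choose_sq_div_le_choose_mul_pow_pred {ℓ : ℕ} (hℓ : 1 ≤ ℓ) (d : ℕ) :
    (d.choose ℓ : ℝ) ^ 2 / d ≤ d.choose ℓ * (d : ℝ) ^ (ℓ - 1) := by
  rcases Nat.eq_zero_or_pos d with rfl | hd
  · simp only [CharP.cast_eq_zero, div_zero]
    positivity
  have hC : (d.choose ℓ : ℝ) ≤ d * (d : ℝ) ^ (ℓ - 1) := by
    rw [mul_pow_sub_one (by omega)]
    exact_mod_cast Nat.choose_le_pow d ℓ
  rw [div_le_iff₀ (by positivity), sq, mul_assoc]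
  exact mul_le_mul_of_nonneg_left (by linarith) (by positivity)

theorem choose_mul_pow_pred_le {ℓ d : ℕ} (hℓ : 1 ≤ ℓ) {m : ℝ} (hd : d ≤ m) :
    m * (d.choose ℓ * (d : ℝ) ^ (ℓ - 1)) ≤ m ^ ℓ * d.choose ℓ := by
  have hm : 0 ≤ m := le_trans (Nat.cast_nonneg d) hd
  calc m * (d.choose ℓ * (d : ℝ) ^ (ℓ - 1)) ≤ m * (d.choose ℓ * m ^ (ℓ - 1)) := by gcongr
    _ = m ^ ℓ * d.choose ℓ := by rw [← mul_pow_sub_one (by omega : ℓ ≠ 0) m]; ring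

theorem stmt_16_general {V : Type*} [Fintype V] (G : SimpleGraph V)
    [DecidableRel G.Adj] (ℓ : ℕ) (hℓ : 1 ≤ ℓ)
    (m : ℕ) (hm : m = G.edgeFinset.card) (hm1 : 1 ≤ m)
    (p X : V → ℝ)
    (hp : ∀ v, p v = (G.degree v : ℝ) / (2 * m))
    (hX : ∀ v, X v =
      if ℓ ≤ G.degree v then (2 * (m : ℝ) / (G.degree v)) * ((G.degree v).choose ℓ : ℝ)
      else 0) :
    (∑ v : V, p v * (X v - ∑ w : V, p w * X w) ^ 2 ≤ ∑ v : V, p v * X v ^ 2) ∧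
    (∑ v : V, p v * X v ^ 2 ≤
      2 * m * ∑ v ∈ Finset.univ.filter (fun v => ℓ ≤ G.degree v),
        ((G.degree v).choose ℓ : ℝ) * (G.degree v : ℝ) ^ (ℓ - 1)) ∧
    (2 * m * ∑ v ∈ Finset.univ.filter (fun v => ℓ ≤ G.degree v),
        ((G.degree v).choose ℓ : ℝ) * (G.degree v : ℝ) ^ (ℓ - 1) ≤
      2 * (m : ℝ) ^ ℓ * ∑ v : V, p v * X v) := by
  have hm0 : (m : ℝ) ≠ 0 := by exact_mod_cast (by omega : m ≠ 0)
  have hpX : ∀ v, p v * X v = if ℓ ≤ G.degree v then ((G.degree v).choose ℓ : ℝ) else 0 := by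
    intro v
    rw [hp, hX]
    split_ifs with hd
    · have hd0 : (G.degree v : ℝ) ≠ 0 := by exact_mod_cast (by omega : G.degree v ≠ 0)
      field_simp
    · exact mul_zero _
  have hpX2 : ∀ v, p v * X v ^ 2 = if ℓ ≤ G.degree v then
      2 * m * (((G.degree v).choose ℓ : ℝ) ^ 2 / G.degree v) else 0 := by
    intro v
    rw [show p v * X v ^ 2 = X v * (p v * X v) by ring, hpX, hX]
    split_ifs <;> ring
  refine ⟨sum_mul_sub_sq_le ?_ X, ?_, ?_⟩
  · simp_rw [hp, hm]
    exact G.sum_degree_div_eq_one (card_pos.mp (hm ▸ hm1))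
  · simp_rw [hpX2, ← sum_filter, mul_sum]
    gcongr
    exact choose_sq_div_le_choose_mul_pow_pred hℓ _
  · simp_rw [hpX, ← sum_filter, mul_assoc (2 : ℝ), mul_sum]
    refine sum_le_sum fun v _ => mul_le_mul_of_nonneg_left ?_ zero_le_two
    have hdm : (G.degree v : ℝ) ≤ m := by exact_mod_cast hm ▸ G.degree_le_card_edgeFinset v
    exact choose_mul_pow_pred_le hℓ hdm

/-- Variance bound for the star estimator:
`Var(X) ≤ E[X²] ≤ 2m · Σ_{v : deg v ≥ ℓ} C(deg v, ℓ) · deg v ^ (ℓ-1) ≤ 2 m^ℓ · E[X]`. -/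
theorem stmt_16 {V : Type*} [Fintype V] [DecidableEq V] (G : SimpleGraph V)
    [DecidableRel G.Adj] (ℓ : ℕ) (hℓ : 1 ≤ ℓ)
    (m : ℕ) (hm : m = G.edgeFinset.card) (hm1 : 1 ≤ m)
    (p X : V → ℝ)
    (hp : ∀ v, p v = (G.degree v : ℝ) / (2 * m))
    (hX : ∀ v, X v =
      if ℓ ≤ G.degree v then (2 * (m : ℝ) / (G.degree v)) * ((G.degree v).choose ℓ : ℝ)
      else 0) :
    (∑ v : V, p v * (X v - ∑ w : V, p w * X w) ^ 2 ≤ ∑ v : V, p v * X v ^ 2) ∧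
    (∑ v : V, p v * X v ^ 2 ≤
      2 * m * ∑ v ∈ Finset.univ.filter (fun v => ℓ ≤ G.degree v),
        ((G.degree v).choose ℓ : ℝ) * (G.degree v : ℝ) ^ (ℓ - 1)) ∧
    (2 * m * ∑ v ∈ Finset.univ.filter (fun v => ℓ ≤ G.degree v),
        ((G.degree v).choose ℓ : ℝ) * (G.degree v : ℝ) ^ (ℓ - 1) ≤
      2 * (m : ℝ) ^ ℓ * ∑ v : V, p v * X v) :=
  stmt_16_general G ℓ hℓ m hm hm1 p X hp hX
end

section
/- With the star estimator X for S_ℓ as above, Var(X) ≤ 4m · ℓ^{2ℓ} · (#S_ℓ)^{2−1/ℓ}, where #S_ℓ = Σ_{v: d_v ≥ ℓ} binom(d_v, ℓ). -/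
/-!
Since `Var X ≤ E[X²]`, it suffices to bound `E[X²] = ∑_{d_v ≥ ℓ} 2m · C_v² / d_v`, where
`C_v = binom(d_v, ℓ)`. From `d^ℓ ≤ ℓ^ℓ · binom(d, ℓ)` we get `d_v ≤ ℓ · C_v^{1/ℓ}`, hence
`C_v / d_v ≤ d_v^{ℓ-1} ≤ ℓ^{ℓ-1} C_v^{1-1/ℓ} ≤ ℓ^{ℓ-1} S^{1-1/ℓ}` with `S = ∑_v C_v`, and summing
`C_v` once more gives `E[X²] ≤ 2m · ℓ^{ℓ-1} · S^{2-1/ℓ}`.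
-/

open Finset

theorem sum_mul_sub_sum_mul_sq_le {ι K : Type*} [CommRing K] [LinearOrder K] [IsStrictOrderedRing K]
    (s : Finset ι) (p X : ι → K) (hp : ∑ i ∈ s, p i = 1) :
    ∑ i ∈ s, p i * (X i - ∑ j ∈ s, p j * X j) ^ 2 ≤ ∑ i ∈ s, p i * X i ^ 2 := by
  set μ := ∑ j ∈ s, p j * X j
  have hvar : ∑ i ∈ s, p i * (X i - μ) ^ 2 = ∑ i ∈ s, p i * X i ^ 2 - μ ^ 2 := by
    have hterm : ∀ i, p i * (X i - μ) ^ 2 = p i * X i ^ 2 - 2 * μ * (p i * X i) + μ ^ 2 * p i :=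
      fun i => by ring
    simp only [hterm, sum_add_distrib, sum_sub_distrib, ← mul_sum, hp]
    ring
  rw [hvar]
  exact sub_le_self _ (sq_nonneg μ)

namespace Nat

theorem pow_le_pow_mul_choose {n k : ℕ} (h : k ≤ n) : n ^ k ≤ k ^ k * n.choose k := by
  have key : n ^ k * k.descFactorial k ≤ k ^ k * n.descFactorial k := by
    have hpow (b : ℕ) : b ^ k = ∏ _i ∈ range k, b := by simp
    rw [descFactorial_eq_prod_range, descFactorial_eq_prod_range, hpow n, hpow k,
      ← prod_mul_distrib, ← prod_mul_distrib]
    refine prod_le_prod' fun i _ => ?_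
    rw [Nat.mul_sub, Nat.mul_sub, Nat.mul_comm k n]
    exact Nat.sub_le_sub_left (Nat.mul_le_mul_right i h) _
  rw [descFactorial_self, descFactorial_eq_factorial_mul_choose, Nat.mul_left_comm,
    Nat.mul_comm] at key
  exact Nat.le_of_mul_le_mul_left key k.factorial_pos

theorem cast_le_mul_choose_rpow_inv {n k : ℕ} (hk : k ≠ 0) (h : k ≤ n) :
    (n : ℝ) ≤ k * (n.choose k : ℝ) ^ (k⁻¹ : ℝ) := by
  refine le_of_pow_le_pow_left₀ hk (by positivity) ?_
  rw [mul_pow, Real.rpow_inv_natCast_pow (by positivity) hk]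
  exact_mod_cast pow_le_pow_mul_choose h

theorem choose_div_le_pow_mul_choose_rpow {n k : ℕ} (hk : 1 ≤ k) (h : k ≤ n) :
    (n.choose k : ℝ) / n ≤ (k : ℝ) ^ (k - 1) * (n.choose k : ℝ) ^ (1 - 1 / k : ℝ) := by
  have hn : (0 : ℝ) < n := by exact_mod_cast hk.trans h
  have hexp : (k⁻¹ : ℝ) * ((k - 1 : ℕ) : ℝ) = 1 - 1 / k := by
    rw [Nat.cast_sub hk, Nat.cast_one]
    field_simp
  calc (n.choose k : ℝ) / n ≤ (n : ℝ) ^ (k - 1) := by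
        rw [div_le_iff₀ hn, ← pow_succ, Nat.sub_add_cancel hk]
        exact_mod_cast choose_le_pow n k
    _ ≤ (k * (n.choose k : ℝ) ^ (k⁻¹ : ℝ)) ^ (k - 1) :=
        pow_le_pow_left₀ hn.le (cast_le_mul_choose_rpow_inv (by omega) h) _
    _ = (k : ℝ) ^ (k - 1) * (n.choose k : ℝ) ^ (1 - 1 / k : ℝ) := by
        rw [mul_pow, ← Real.rpow_natCast ((n.choose k : ℝ) ^ (k⁻¹ : ℝ)),
          ← Real.rpow_mul (by positivity), hexp]

end Nat

theorem SimpleGraph.sum_mul_starEstimator_sq_le {V : Type*} [Fintype V] (G : SimpleGraph V)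
    [DecidableRel G.Adj] {ℓ : ℕ} (hℓ : 1 ≤ ℓ) (m : ℕ) (p X : V → ℝ)
    (hp : ∀ v, p v = (G.degree v : ℝ) / (2 * m))
    (hX : ∀ v, X v =
      if ℓ ≤ G.degree v then (2 * (m : ℝ) / (G.degree v)) * ((G.degree v).choose ℓ : ℝ)
      else 0) :
    ∑ v, p v * X v ^ 2 ≤
      2 * m * (ℓ : ℝ) ^ (ℓ - 1) *
        (∑ v ∈ univ.filter (fun v => ℓ ≤ G.degree v), ((G.degree v).choose ℓ : ℝ)) ^
          ((2 : ℝ) - 1 / ℓ) := by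
  set F := univ.filter (fun v => ℓ ≤ G.degree v)
  set S := ∑ v ∈ F, ((G.degree v).choose ℓ : ℝ)
  have hterm (v : V) : p v * X v ^ 2 =
      if ℓ ≤ G.degree v then
        2 * m * (((G.degree v).choose ℓ : ℝ) / G.degree v) * ((G.degree v).choose ℓ : ℝ)
      else 0 := by
    rw [hp, hX]
    split_ifs with hv
    · have hd : (G.degree v : ℝ) ≠ 0 := Nat.cast_ne_zero.mpr (by omega)
      rcases eq_or_ne (m : ℝ) 0 with hm | hm
      · simp [hm]
      · field_simp
    · simp
  have hexp_nonneg : (0 : ℝ) ≤ 1 - 1 / ℓ := by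
    rw [sub_nonneg, div_le_one (by positivity)]
    exact_mod_cast hℓ
  have hexp : (2 : ℝ) - 1 / ℓ = (1 - 1 / ℓ) + 1 := by ring
  calc ∑ v, p v * X v ^ 2
        = ∑ v ∈ F, 2 * m * (((G.degree v).choose ℓ : ℝ) / G.degree v) *
            ((G.degree v).choose ℓ : ℝ) := by
          rw [sum_filter]
          exact sum_congr rfl fun v _ => hterm v
    _ ≤ ∑ v ∈ F, 2 * m * ((ℓ : ℝ) ^ (ℓ - 1) * S ^ (1 - 1 / ℓ : ℝ)) *
            ((G.degree v).choose ℓ : ℝ) := by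
          refine sum_le_sum fun v hv => ?_
          have hdeg : ℓ ≤ G.degree v := (mem_filter.mp hv).2
          have hCS : ((G.degree v).choose ℓ : ℝ) ≤ S :=
            single_le_sum (f := fun v => ((G.degree v).choose ℓ : ℝ))
              (fun _ _ => Nat.cast_nonneg _) hv
          gcongr
          calc ((G.degree v).choose ℓ : ℝ) / G.degree v
              ≤ (ℓ : ℝ) ^ (ℓ - 1) * ((G.degree v).choose ℓ : ℝ) ^ (1 - 1 / ℓ : ℝ) :=
                Nat.choose_div_le_pow_mul_choose_rpow hℓ hdeg
            _ ≤ (ℓ : ℝ) ^ (ℓ - 1) * S ^ (1 - 1 / ℓ : ℝ) := by gcongr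
    _ = 2 * m * (ℓ : ℝ) ^ (ℓ - 1) * S ^ ((2 : ℝ) - 1 / ℓ) := by
          rw [← mul_sum, hexp, Real.rpow_add_one' (sum_nonneg fun _ _ => Nat.cast_nonneg _)
            (by positivity)]
          ring

theorem stmt_17_general {V : Type*} [Fintype V] (G : SimpleGraph V)
    [DecidableRel G.Adj] (ℓ : ℕ) (hℓ : 1 ≤ ℓ)
    (m : ℕ) (hm : m = G.edgeFinset.card) (hm1 : 1 ≤ m)
    (p X : V → ℝ)
    (hp : ∀ v, p v = (G.degree v : ℝ) / (2 * m))
    (hX : ∀ v, X v =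
      if ℓ ≤ G.degree v then (2 * (m : ℝ) / (G.degree v)) * ((G.degree v).choose ℓ : ℝ)
      else 0) :
    ∑ v : V, p v * (X v - ∑ w : V, p w * X w) ^ 2 ≤
      4 * m * (ℓ : ℝ) ^ (2 * ℓ) *
        (∑ v ∈ Finset.univ.filter (fun v => ℓ ≤ G.degree v),
            ((G.degree v).choose ℓ : ℝ)) ^ ((2 : ℝ) - 1 / ℓ) := by
  have hpsum : ∑ v, p v = 1 := by
    have hm0 : (2 * m : ℝ) ≠ 0 := by positivity
    simp only [hp, ← sum_div, ← Nat.cast_sum, G.sum_degrees_eq_twice_card_edges, ← hm]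
    push_cast
    exact div_self hm0
  calc ∑ v, p v * (X v - ∑ w, p w * X w) ^ 2 ≤ ∑ v, p v * X v ^ 2 :=
        sum_mul_sub_sum_mul_sq_le _ p X hpsum
    _ ≤ 2 * m * (ℓ : ℝ) ^ (ℓ - 1) *
          (∑ v ∈ univ.filter (fun v => ℓ ≤ G.degree v), ((G.degree v).choose ℓ : ℝ)) ^
            ((2 : ℝ) - 1 / ℓ) :=
        G.sum_mul_starEstimator_sq_le hℓ m p X hp hX
    _ ≤ _ := by
        gcongr
        · norm_num
        · exact_mod_cast hℓ
        · omega

/-- Improved variance bound for the star estimator: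
`Var(X) ≤ 4m · ℓ^{2ℓ} · (#S_ℓ)^{2 - 1/ℓ}` where `#S_ℓ = Σ_{v : deg v ≥ ℓ} C(deg v, ℓ)`. -/
theorem stmt_17 {V : Type*} [Fintype V] [DecidableEq V] (G : SimpleGraph V)
    [DecidableRel G.Adj] (ℓ : ℕ) (hℓ : 1 ≤ ℓ)
    (m : ℕ) (hm : m = G.edgeFinset.card) (hm1 : 1 ≤ m)
    (p X : V → ℝ)
    (hp : ∀ v, p v = (G.degree v : ℝ) / (2 * m))
    (hX : ∀ v, X v =
      if ℓ ≤ G.degree v then (2 * (m : ℝ) / (G.degree v)) * ((G.degree v).choose ℓ : ℝ)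
      else 0) :
    ∑ v : V, p v * (X v - ∑ w : V, p w * X w) ^ 2 ≤
      4 * m * (ℓ : ℝ) ^ (2 * ℓ) *
        (∑ v ∈ Finset.univ.filter (fun v => ℓ ≤ G.degree v),
            ((G.degree v).choose ℓ : ℝ)) ^ ((2 : ℝ) - 1 / ℓ) :=
  stmt_17_general G ℓ hℓ m hm hm1 p X hp hX
end
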